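/- For odd r, the function q₂(x,y) = ζ₃₂^{r x²} · i^{-r y²} on ℤ/16 × ℤ/2 is well-defined (depends only on the residues of x mod 16 and y mod 2) and is invariant under the automorphism θ₂(x,y) = (3x+8y, x+y), i.e. q₂(θ₂(x,y)) = q₂(x,y) for all (x,y). -/
import Mathlib


open Complex

/-- ζ₃₂ = exp(2πi/32). -/
noncomputable def zeta32 : ℂ := Complex.exp (2 * Real.pi * Complex.I / 32)

/-- q₂(x,y) = ζ₃₂^{r x²} · i^{-r y²} on integer representatives. -/
noncomputable def q2 (r x y : ℤ) : ℂ := zeta32 ^ (r * x ^ 2) * Complex.I ^ (-(r * y ^ 2))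

lemma zeta32_ne_zero : zeta32 ≠ 0 := Complex.exp_ne_zero _

lemma zeta32_pow_32 : zeta32 ^ (32 : ℤ) = 1 := by
  rw [zeta32, ← Complex.exp_int_mul]
  rw [show ((32:ℤ):ℂ) * (2 * Real.pi * Complex.I / 32) = 2 * Real.pi * Complex.I by
    push_cast; ring]
  exact Complex.exp_two_pi_mul_I

lemma zeta32_zpow_congr {a b : ℤ} (h : a ≡ b [ZMOD 32]) : zeta32 ^ a = zeta32 ^ b := by
  obtain ⟨k, hk⟩ := h.dvd
  have hb : b = a + 32 * k := by omega
  rw [hb, zpow_add₀ zeta32_ne_zero, zpow_mul, zeta32_pow_32, one_zpow, mul_one]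

lemma I_eq_zeta32 : Complex.I = zeta32 ^ (8 : ℤ) := by
  rw [zeta32, ← Complex.exp_int_mul]
  rw [show ((8:ℤ):ℂ) * (2 * Real.pi * Complex.I / 32) = ((Real.pi/2 : ℝ):ℂ) * Complex.I by
    push_cast; ring]
  rw [Complex.exp_mul_I, ← Complex.ofReal_cos, ← Complex.ofReal_sin,
    Real.cos_pi_div_two, Real.sin_pi_div_two]
  simp

lemma q2_eq (r x y : ℤ) : q2 r x y = zeta32 ^ (r * x ^ 2 - 8 * (r * y ^ 2)) := by
  rw [q2, I_eq_zeta32, ← zpow_mul, ← zpow_add₀ zeta32_ne_zero]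
  ring_nf

theorem q2_well_defined_and_theta2_invariant (r : ℤ) (hr : Odd r) :
    (∀ x x' y y' : ℤ, x ≡ x' [ZMOD 16] → y ≡ y' [ZMOD 2] → q2 r x y = q2 r x' y') ∧
    (∀ x y : ℤ, q2 r (3 * x + 8 * y) (x + y) = q2 r x y) := by
  constructor
  · intro x x' y y' hx hy
    rw [q2_eq, q2_eq]
    apply zeta32_zpow_congr
    obtain ⟨k, hk⟩ := hx.dvd
    obtain ⟨m, hm⟩ := hy.dvd
    have hx' : x' = x + 16 * k := by omega
    have hy' : y' = y + 2 * m := by omega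
    refine Int.modEq_iff_dvd.mpr ⟨r * (k * x + 8 * k ^ 2) - r * (m * y + m ^ 2), ?_⟩
    subst hx' hy'; ring
  · intro x y
    rw [q2_eq, q2_eq]
    apply zeta32_zpow_congr
    exact Int.modEq_iff_dvd.mpr ⟨-(r * (x * y + 2 * y ^ 2)), by ring⟩
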